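/- arXiv:2204.06653 — 6 statements merged into one kernel-verified Lean document; each statement's English description precedes it below -/
import Mathlib

section
/- Let A ∈ ℝ^{n×d} with spectral norm σ = ‖A‖_op, λ > 0, x* the ridge regression minimizer of cost(x) = ‖Ax − b‖² + λ‖x‖², and Opt = cost(x*). If a vector x̃ satisfies ‖x̃ − x*‖ ≤ ε‖x*‖, then cost(x̃) ≤ (1 + (1 + σ²/λ)ε²)·Opt. -/
/-!
At a minimizer `x*` of the strictly convex quadratic `cost`, the linear term of the expansion of
`cost (x* + e)` vanishes, so `cost (x* + e) = Opt + ‖A e‖² + λ‖e‖² ≤ Opt + (σ² + λ)‖e‖²`.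
With `‖e‖ ≤ ε‖x*‖` and `λ‖x*‖² ≤ Opt` this is at most `Opt + (1 + σ²/λ) ε² Opt`.
-/

open Matrix WithLp
open scoped InnerProductSpace

lemma linear_coeff_eq_zero_of_forall_nonneg {K : Type*} [Field K] [LinearOrder K]
    [IsStrictOrderedRing K] {a b : K} (h : ∀ t : K, 0 ≤ a * (t * t) + b * t) : b = 0 := by
  have hd := discrim_le_zero (K := K) (c := 0) (by simpa using h)
  rw [discrim, mul_zero, sub_zero] at hd
  exact pow_eq_zero_iff two_ne_zero |>.mp (le_antisymm hd (sq_nonneg b))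

section Ridge

variable {E F : Type*} [NormedAddCommGroup E] [InnerProductSpace ℝ E]
  [NormedAddCommGroup F] [InnerProductSpace ℝ F]

def ridgeCost (T : E →L[ℝ] F) (b : F) (l : ℝ) (x : E) : ℝ :=
  ‖T x - b‖ ^ 2 + l * ‖x‖ ^ 2

variable {T : E →L[ℝ] F} {b : F} {l : ℝ}

lemma ridgeCost_add_smul (x h : E) (t : ℝ) :
    ridgeCost T b l (x + t • h) = ridgeCost T b l x
      + (‖T h‖ ^ 2 + l * ‖h‖ ^ 2) * (t * t)
      + 2 * (⟪T x - b, T h⟫_ℝ + l * ⟪x, h⟫_ℝ) * t := by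
  have hTx : T (x + t • h) - b = (T x - b) + t • T h := by
    rw [map_add, map_smul]; abel
  simp only [ridgeCost, hTx, norm_add_sq_real, norm_smul, inner_smul_right, Real.norm_eq_abs,
    mul_pow, sq_abs]
  ring

lemma ridgeCost_add_of_forall_le {x : E} (hx : ∀ y, ridgeCost T b l x ≤ ridgeCost T b l y)
    (h : E) : ridgeCost T b l (x + h) = ridgeCost T b l x + (‖T h‖ ^ 2 + l * ‖h‖ ^ 2) := by
  have hgrad : 2 * (⟪T x - b, T h⟫_ℝ + l * ⟪x, h⟫_ℝ) = 0 :=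
    linear_coeff_eq_zero_of_forall_nonneg (a := ‖T h‖ ^ 2 + l * ‖h‖ ^ 2) fun t => by
      have := hx (x + t • h)
      rw [ridgeCost_add_smul] at this
      linarith
  simpa [hgrad] using ridgeCost_add_smul (T := T) (b := b) (l := l) x h 1

lemma ridgeCost_le_of_norm_sub_le (hl : 0 < l) {x y : E}
    (hx : ∀ z, ridgeCost T b l x ≤ ridgeCost T b l z) {ε : ℝ} (hy : ‖y - x‖ ≤ ε * ‖x‖) :
    ridgeCost T b l y ≤ (1 + (1 + ‖T‖ ^ 2 / l) * ε ^ 2) * ridgeCost T b l x := by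
  set e := y - x
  have hreg : l * ‖x‖ ^ 2 ≤ ridgeCost T b l x := le_add_of_nonneg_left (sq_nonneg _)
  have hTe : ‖T e‖ ^ 2 ≤ ‖T‖ ^ 2 * ‖e‖ ^ 2 := by
    rw [← mul_pow]; exact pow_le_pow_left₀ (norm_nonneg _) (T.le_opNorm e) 2
  have he : ‖e‖ ^ 2 ≤ ε ^ 2 * ‖x‖ ^ 2 := by
    rw [← mul_pow]; exact pow_le_pow_left₀ (norm_nonneg _) hy 2
  calc ridgeCost T b l y
      = ridgeCost T b l x + (‖T e‖ ^ 2 + l * ‖e‖ ^ 2) := by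
        rw [← ridgeCost_add_of_forall_le hx, add_sub_cancel]
    _ ≤ ridgeCost T b l x + (‖T‖ ^ 2 + l) * (ε ^ 2 * ‖x‖ ^ 2) := by
        gcongr; nlinarith
    _ = ridgeCost T b l x + (1 + ‖T‖ ^ 2 / l) * ε ^ 2 * (l * ‖x‖ ^ 2) := by
        field_simp; ring
    _ ≤ (1 + (1 + ‖T‖ ^ 2 / l) * ε ^ 2) * ridgeCost T b l x := by
        nlinarith [show 0 ≤ (1 + ‖T‖ ^ 2 / l) * ε ^ 2 by positivity]

end Ridge

lemma ridgeCost_toEuclideanLin {m n : Type*} [Fintype m] [Fintype n] [DecidableEq n]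
    (A : Matrix m n ℝ) (b : m → ℝ) (l : ℝ) (x : n → ℝ) :
    ridgeCost (LinearMap.toContinuousLinearMap (toEuclideanLin A)) (toLp 2 b) l (toLp 2 x)
      = (∑ i, ((A *ᵥ x) i - b i) ^ 2) + l * ∑ j, x j ^ 2 := by
  simp [ridgeCost, EuclideanSpace.real_norm_sq_eq]

lemma EuclideanSpace.norm_toLp_real {n : Type*} [Fintype n] (x : n → ℝ) :
    ‖toLp 2 x‖ = √(∑ j, x j ^ 2) := by
  simp [EuclideanSpace.norm_eq]

theorem ridge_cost_of_close_solution_general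
    (n d : ℕ) (A : Matrix (Fin n) (Fin d) ℝ) (b : Fin n → ℝ) (l : ℝ) (hl : 0 < l)
    (σ : ℝ)
    (hσ : σ = ‖(LinearMap.toContinuousLinearMap
        (Matrix.toEuclideanLin A : EuclideanSpace ℝ (Fin d) →ₗ[ℝ] EuclideanSpace ℝ (Fin n)))‖)
    (cost : (Fin d → ℝ) → ℝ)
    (hcost : ∀ x, cost x = (∑ i, (A.mulVec x i - b i) ^ 2) + l * ∑ j, x j ^ 2)
    (xstar : Fin d → ℝ)
    (hxstar : ∀ x, cost xstar ≤ cost x)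
    (Opt : ℝ) (hOpt : Opt = cost xstar)
    (ε : ℝ)
    (xt : Fin d → ℝ)
    (hclose : Real.sqrt (∑ j, (xt j - xstar j) ^ 2) ≤ ε * Real.sqrt (∑ j, xstar j ^ 2)) :
    cost xt ≤ (1 + (1 + σ ^ 2 / l) * ε ^ 2) * Opt := by
  set T := LinearMap.toContinuousLinearMap
    (toEuclideanLin A : EuclideanSpace ℝ (Fin d) →ₗ[ℝ] EuclideanSpace ℝ (Fin n))
  have hcost' (x : Fin d → ℝ) : cost x = ridgeCost T (toLp 2 b) l (toLp 2 x) := by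
    rw [hcost, ridgeCost_toEuclideanLin]
  have hmin (z : EuclideanSpace ℝ (Fin d)) :
      ridgeCost T (toLp 2 b) l (toLp 2 xstar) ≤ ridgeCost T (toLp 2 b) l z := by
    simpa only [hcost', toLp_ofLp] using hxstar (ofLp z)
  have hclose' : ‖toLp 2 xt - toLp 2 xstar‖ ≤ ε * ‖toLp 2 xstar‖ := by
    simpa only [← toLp_sub, EuclideanSpace.norm_toLp_real, Pi.sub_apply] using hclose
  rw [hσ, hOpt, hcost', hcost']
  exact ridgeCost_le_of_norm_sub_le hl hmin hclose'

/-- If `σ = ‖A‖_op`, `l > 0`, `x*` is the ridge minimizer,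
`Opt = cost x*`, and `‖x̃ - x*‖ ≤ ε ‖x*‖`, then
`cost x̃ ≤ (1 + (1 + σ²/l) ε²) · Opt`. -/
theorem ridge_cost_of_close_solution
    (n d : ℕ) (A : Matrix (Fin n) (Fin d) ℝ) (b : Fin n → ℝ) (l : ℝ) (hl : 0 < l)
    (σ : ℝ)
    (hσ : σ = ‖(LinearMap.toContinuousLinearMap
        (Matrix.toEuclideanLin A : EuclideanSpace ℝ (Fin d) →ₗ[ℝ] EuclideanSpace ℝ (Fin n)))‖)
    (cost : (Fin d → ℝ) → ℝ)
    (hcost : ∀ x, cost x = (∑ i, (A.mulVec x i - b i) ^ 2) + l * ∑ j, x j ^ 2)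
    (xstar : Fin d → ℝ)
    (hxstar : ∀ x, cost xstar ≤ cost x)
    (Opt : ℝ) (hOpt : Opt = cost xstar)
    (ε : ℝ) (hε : 0 ≤ ε)
    (xt : Fin d → ℝ)
    (hclose : Real.sqrt (∑ j, (xt j - xstar j) ^ 2) ≤ ε * Real.sqrt (∑ j, xstar j ^ 2)) :
    cost xt ≤ (1 + (1 + σ ^ 2 / l) * ε ^ 2) * Opt :=
  ridge_cost_of_close_solution_general n d A b l hl σ hσ cost hcost xstar hxstar Opt hOpt ε xt
    hclose
end

section
/- Let A = UΣVᵀ be a singular value decomposition of A ∈ ℝ^{n×d} (U ∈ ℝ^{n×ρ}, Σ ∈ ℝ^{ρ×ρ} positive diagonal, V ∈ ℝ^{d×ρ} with orthonormal columns), let λ = 1, b ∈ ℝ^n, and let S ∈ ℝ^{m×d} satisfy ‖VᵀSᵀSV − I‖_op ≤ 1/2 and ‖VᵀSᵀSVv − v‖ ≤ √ε·‖v‖ where v = (I + Σ⁻²)⁻¹Σ⁻¹Uᵀb. Then x̃ = Aᵀ(ASᵀSAᵀ + I)⁻¹b and x* = Aᵀ(AAᵀ + I)⁻¹b satisfy ‖x̃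 − x*‖ ≤ 2√ε·‖x*‖. -/
/-!
Write `M = VᵀSᵀSV`, `Q = Σ⁻²` and `y = Σ⁻¹Uᵀb`. Push-through identities for `A = UΣVᵀ` give
`x̃ = V (M + Q)⁻¹ y`; the case `S = I` gives `x* = V (I + Q)⁻¹ y = V v`. Hence
`(M + Q)(ṽ - v) = v - Mv`, where `ṽ = (M + Q)⁻¹ y`. As `‖M - I‖ ≤ 1/2` and `Q ⪰ 0`,
`⟪(M + Q)w, w⟫ ≥ ‖w‖²/2`, so `‖ṽ - v‖ ≤ 2‖Mv - v‖ ≤ 2√ε‖v‖`; finally `V` is an isometry.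
-/

open Matrix

theorem one_sub_mul_norm_le_norm_add {E : Type*} [NormedAddCommGroup E] [InnerProductSpace ℝ E]
    {c : ℝ} {w t r : E} (ht : ‖t - w‖ ≤ c * ‖w‖) (hr : 0 ≤ inner ℝ r w) :
    (1 - c) * ‖w‖ ≤ ‖t + r‖ := by
  have hlower : (1 - c) * ‖w‖ ^ 2 ≤ inner ℝ (t + r) w := by
    have hsplit : inner ℝ (t + r) w = ‖w‖ ^ 2 + inner ℝ (t - w) w + inner ℝ r w := by
      rw [inner_add_left, inner_sub_left, real_inner_self_eq_norm_sq]; ring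
    have hcs : -(‖t - w‖ * ‖w‖) ≤ inner ℝ (t - w) w := neg_le_of_abs_le (abs_real_inner_le_norm _ _)
    nlinarith [norm_nonneg w]
  have hupper : inner ℝ (t + r) w ≤ ‖t + r‖ * ‖w‖ := real_inner_le_norm _ _
  rcases (norm_nonneg w).eq_or_lt with hw | hw
  · rw [← hw, mul_zero]; exact norm_nonneg _
  · nlinarith

section Euclidean

variable {ι κ : Type*} [Fintype ι] [Fintype κ]

theorem norm_toLp_mulVec_of_transpose_mul_self_eq_one [DecidableEq ι] {V : Matrix κ ι ℝ}
    (hV : Vᵀ * V = 1) (x : ι → ℝ) : ‖WithLp.toLp 2 (V *ᵥ x)‖ = ‖WithLp.toLp 2 x‖ := by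
  have : ‖WithLp.toLp 2 (V *ᵥ x)‖ ^ 2 = ‖WithLp.toLp 2 x‖ ^ 2 := by
    rw [← real_inner_self_eq_norm_sq, ← real_inner_self_eq_norm_sq, EuclideanSpace.inner_toLp_toLp,
      EuclideanSpace.inner_toLp_toLp, star_trivial, star_trivial, dotProduct_mulVec, vecMul_mulVec,
      ← mulVec_transpose, transpose_mul, transpose_transpose, hV, one_mulVec]
  exact (sq_eq_sq₀ (norm_nonneg _) (norm_nonneg _)).mp this

theorem inner_toLp_mulVec_self_nonneg {Q : Matrix ι ι ℝ} (hQ : Q.PosSemidef) (w : ι → ℝ) :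
    0 ≤ inner ℝ (WithLp.toLp 2 (Q *ᵥ w)) (WithLp.toLp 2 w) := by
  rw [EuclideanSpace.inner_toLp_toLp, star_trivial]
  simpa using hQ.dotProduct_mulVec_nonneg w

theorem norm_toLp_mulVec_le_of_opNorm_le [DecidableEq ι] {B : Matrix ι ι ℝ} {c : ℝ}
    (hB : ‖LinearMap.toContinuousLinearMap
      (toEuclideanLin B : EuclideanSpace ℝ ι →ₗ[ℝ] EuclideanSpace ℝ ι)‖ ≤ c) (w : ι → ℝ) :
    ‖WithLp.toLp 2 (B *ᵥ w)‖ ≤ c * ‖WithLp.toLp 2 w‖ :=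
  ContinuousLinearMap.le_of_opNorm_le _ hB (WithLp.toLp 2 w)

theorem one_sub_mul_norm_sub_le_of_add_mulVec_eq [DecidableEq ι] {M Q : Matrix ι ι ℝ} {c : ℝ}
    (hM : ‖LinearMap.toContinuousLinearMap
      (toEuclideanLin (M - 1) : EuclideanSpace ℝ ι →ₗ[ℝ] EuclideanSpace ℝ ι)‖ ≤ c)
    (hQ : Q.PosSemidef) {v v' : ι → ℝ} (h : (M + Q) *ᵥ v' = (1 + Q) *ᵥ v) :
    (1 - c) * ‖WithLp.toLp 2 (v' - v)‖ ≤ ‖WithLp.toLp 2 (M *ᵥ v - v)‖ := by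
  set w := v' - v
  have hw : M *ᵥ w + Q *ᵥ w = -(M *ᵥ v - v) := by
    rw [← add_mulVec, mulVec_sub, h, add_mulVec, add_mulVec, one_mulVec]; abel
  have ht : ‖WithLp.toLp 2 (M *ᵥ w) - WithLp.toLp 2 w‖ ≤ c * ‖WithLp.toLp 2 w‖ := by
    simpa [← WithLp.toLp_sub, sub_mulVec] using norm_toLp_mulVec_le_of_opNorm_le hM w
  have h := one_sub_mul_norm_le_norm_add ht (inner_toLp_mulVec_self_nonneg hQ w)
  rwa [← WithLp.toLp_add, hw, WithLp.toLp_neg, norm_neg] at h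

end Euclidean

section CommRing

variable {R n ρ : Type*} [CommRing R] [Fintype n] [DecidableEq n] [Fintype ρ] [DecidableEq ρ]

theorem transpose_mul_inv_mul_mul_transpose_add_one {U : Matrix n ρ R} (hU : Uᵀ * U = 1)
    {B : Matrix ρ ρ R} (hB : IsUnit (B + 1).det) :
    Uᵀ * (U * B * Uᵀ + 1)⁻¹ = (B + 1)⁻¹ * Uᵀ := by
  have hcomm : Uᵀ * (U * B * Uᵀ + 1) = (B + 1) * Uᵀ := by
    simp only [Matrix.mul_add, Matrix.add_mul, ← Matrix.mul_assoc, hU, Matrix.one_mul,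
      Matrix.mul_one]
  have hdet : IsUnit (U * B * Uᵀ + 1).det := by
    rwa [det_mul_add_one_comm, ← Matrix.mul_assoc, hU, Matrix.one_mul]
  calc Uᵀ * (U * B * Uᵀ + 1)⁻¹ = (B + 1)⁻¹ * ((B + 1) * Uᵀ) * (U * B * Uᵀ + 1)⁻¹ := by
        rw [nonsing_inv_mul_cancel_left _ _ hB]
    _ = (B + 1)⁻¹ * Uᵀ := by
        rw [← hcomm, ← Matrix.mul_assoc, mul_nonsing_inv_cancel_right _ _ hdet]

theorem mul_mul_transpose_add_one_eq {Sig : Matrix ρ ρ R} (hSig : IsUnit Sig.det)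
    (M : Matrix ρ ρ R) :
    Sig * M * Sigᵀ + 1 = Sig * (M + (Sigᵀ * Sig)⁻¹) * Sigᵀ := by
  have hSigT : IsUnit Sigᵀ.det := by rwa [det_transpose]
  have hcancel : Sig * (Sigᵀ * Sig)⁻¹ * Sigᵀ = 1 := by
    rw [Matrix.mul_inv_rev, ← Matrix.mul_assoc, mul_nonsing_inv _ hSig, Matrix.one_mul,
      nonsing_inv_mul _ hSigT]
  rw [Matrix.mul_add, Matrix.add_mul, hcancel]

end CommRing

section Real

variable {m n d ρ : Type*} [Fintype m] [Fintype n] [DecidableEq n] [Fintype d]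
  [Fintype ρ] [DecidableEq ρ]

theorem isUnit_det_transpose_mul_self_add {Q : Matrix ρ ρ ℝ} (hQ : Q.PosDef) (C : Matrix m ρ ℝ) :
    IsUnit (Cᵀ * C + Q).det := by
  have hpos := PosDef.posSemidef_add (posSemidef_conjTranspose_mul_self C) hQ
  rw [conjTranspose_eq_transpose_of_trivial] at hpos
  exact hpos.det_pos.ne'.isUnit

theorem posDef_inv_transpose_mul_self {Sig : Matrix ρ ρ ℝ} (hSig : IsUnit Sig.det) :
    (Sigᵀ * Sig)⁻¹.PosDef := by
  have hinj := mulVec_injective_iff_isUnit.mpr ((isUnit_iff_isUnit_det Sig).mpr hSig)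
  simpa only [conjTranspose_eq_transpose_of_trivial] using
    (PosDef.conjTranspose_mul_self Sig hinj).inv

theorem sketched_ridge_operator_eq_of_svd {A : Matrix n d ℝ} {U : Matrix n ρ ℝ}
    {Sig : Matrix ρ ρ ℝ} {V : Matrix d ρ ℝ} (hA : A = U * Sig * Vᵀ) (hU : Uᵀ * U = 1)
    (hSig : IsUnit Sig.det) (S : Matrix m d ℝ) :
    Aᵀ * (A * Sᵀ * S * Aᵀ + 1)⁻¹
      = V * (Vᵀ * Sᵀ * S * V + (Sigᵀ * Sig)⁻¹)⁻¹ * Sig⁻¹ * Uᵀ := by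
  have hSigT : IsUnit Sigᵀ.det := by rwa [det_transpose]
  have hgram : A * Sᵀ * S * Aᵀ = U * (Sig * (Vᵀ * Sᵀ * S * V) * Sigᵀ) * Uᵀ := by
    simp only [hA, transpose_mul, transpose_transpose, Matrix.mul_assoc]
  have hB : IsUnit (Sig * (Vᵀ * Sᵀ * S * V) * Sigᵀ + 1).det := by
    convert isUnit_det_transpose_mul_self_add PosDef.one (S * V * Sigᵀ) using 3
    simp only [transpose_mul, transpose_transpose, Matrix.mul_assoc]
  have hAt : Aᵀ = V * (Sigᵀ * Uᵀ) := by
    simp only [hA, transpose_mul, transpose_transpose, Matrix.mul_assoc]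
  rw [hgram, hAt, Matrix.mul_assoc, Matrix.mul_assoc,
    transpose_mul_inv_mul_mul_transpose_add_one hU hB, mul_mul_transpose_add_one_eq hSig,
    Matrix.mul_inv_rev, Matrix.mul_inv_rev]
  simp only [Matrix.mul_assoc, mul_nonsing_inv_cancel_left _ _ hSigT]

end Real

theorem sketched_ridge_solution_error_general
    (n d ρ m : ℕ)
    (A : Matrix (Fin n) (Fin d) ℝ)
    (U : Matrix (Fin n) (Fin ρ) ℝ) (D : Fin ρ → ℝ) (hD : ∀ i, 0 < D i)
    (Sig : Matrix (Fin ρ) (Fin ρ) ℝ) (hSig : Sig = Matrix.diagonal D)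
    (V : Matrix (Fin d) (Fin ρ) ℝ)
    (hSVD : A = U * Sig * Vᵀ)
    (hU : Uᵀ * U = 1) (hV : Vᵀ * V = 1)
    (b : Fin n → ℝ) (S : Matrix (Fin m) (Fin d) ℝ)
    (ε : ℝ)
    (hSE : ‖(LinearMap.toContinuousLinearMap
        (Matrix.toEuclideanLin (Vᵀ * Sᵀ * S * V - 1) :
          EuclideanSpace ℝ (Fin ρ) →ₗ[ℝ] EuclideanSpace ℝ (Fin ρ)))‖ ≤ 1 / 2)
    (v : Fin ρ → ℝ)
    (hv : v = (((1 : Matrix (Fin ρ) (Fin ρ) ℝ) + (Sig ^ 2)⁻¹)⁻¹ * Sig⁻¹ * Uᵀ).mulVec b)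
    (hAMM : Real.sqrt (∑ i, ((Vᵀ * Sᵀ * S * V).mulVec v i - v i) ^ 2)
        ≤ Real.sqrt ε * Real.sqrt (∑ i, v i ^ 2))
    (xt xstar : Fin d → ℝ)
    (hxt : xt = (Aᵀ * (A * Sᵀ * S * Aᵀ + 1)⁻¹).mulVec b)
    (hxstar : xstar = (Aᵀ * (A * Aᵀ + 1)⁻¹).mulVec b) :
    Real.sqrt (∑ j, (xt j - xstar j) ^ 2)
      ≤ 2 * Real.sqrt ε * Real.sqrt (∑ j, xstar j ^ 2) := by
  have hSigDet : IsUnit Sig.det := by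
    rw [hSig, det_diagonal]
    exact (Finset.prod_pos fun i _ => hD i).ne'.isUnit
  have hSigSq : Sigᵀ * Sig = Sig ^ 2 := by rw [hSig, diagonal_transpose, sq]
  have hsketch := sketched_ridge_operator_eq_of_svd hSVD hU hSigDet S
  have hexact := sketched_ridge_operator_eq_of_svd hSVD hU hSigDet (1 : Matrix (Fin d) (Fin d) ℝ)
  simp only [transpose_one, Matrix.mul_one, hV, hSigSq] at hsketch hexact
  have hQ : (Sig ^ 2)⁻¹.PosDef := hSigSq ▸ posDef_inv_transpose_mul_self hSigDet
  set M := Vᵀ * Sᵀ * S * V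
  set Q := (Sig ^ 2)⁻¹
  set y := (Sig⁻¹ * Uᵀ) *ᵥ b
  have hN : IsUnit (M + Q).det := by
    simpa only [M, transpose_mul, Matrix.mul_assoc] using isUnit_det_transpose_mul_self_add hQ (S * V)
  have hP : IsUnit (1 + Q).det := (PosDef.one.add hQ).det_pos.ne'.isUnit
  have hv' : v = (1 + Q)⁻¹ *ᵥ y := by simp only [hv, y, mulVec_mulVec, Matrix.mul_assoc]
  have hxt' : xt = V *ᵥ ((M + Q)⁻¹ *ᵥ y) := by
    rw [hxt, hsketch]
    simp only [y, mulVec_mulVec, Matrix.mul_assoc]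
  have hxstar' : xstar = V *ᵥ v := by
    rw [hxstar, hexact, hv']
    simp only [y, mulVec_mulVec, Matrix.mul_assoc]
  have hsolve : (M + Q) *ᵥ ((M + Q)⁻¹ *ᵥ y) = (1 + Q) *ᵥ v := by
    simp only [hv', mulVec_mulVec, mul_nonsing_inv _ hN, mul_nonsing_inv _ hP, one_mulVec]
  have hstable := one_sub_mul_norm_sub_le_of_add_mulVec_eq hSE hQ.posSemidef hsolve
  have hAMM' : ‖WithLp.toLp 2 (M *ᵥ v - v)‖ ≤ √ε * ‖WithLp.toLp 2 v‖ := by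
    simpa [EuclideanSpace.norm_eq] using hAMM
  suffices ‖WithLp.toLp 2 (xt - xstar)‖ ≤ 2 * √ε * ‖WithLp.toLp 2 xstar‖ by
    simpa [EuclideanSpace.norm_eq] using this
  rw [hxt', hxstar', ← mulVec_sub, norm_toLp_mulVec_of_transpose_mul_self_eq_one hV,
    norm_toLp_mulVec_of_transpose_mul_self_eq_one hV]
  linarith

/-- If `A = U Sig Vᵀ` is an SVD, `l = 1`, and `S` satisfies
`‖VᵀSᵀSV - I‖_op ≤ 1/2` and `‖VᵀSᵀSV v - v‖ ≤ √ε ‖v‖` for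
`v = (I + Sig⁻²)⁻¹ Sig⁻¹ Uᵀ b`, then the sketched ridge solution
`x̃ = Aᵀ(ASᵀSAᵀ + I)⁻¹ b` satisfies `‖x̃ - x*‖ ≤ 2√ε ‖x*‖`. -/
theorem sketched_ridge_solution_error
    (n d ρ m : ℕ)
    (A : Matrix (Fin n) (Fin d) ℝ)
    (U : Matrix (Fin n) (Fin ρ) ℝ) (D : Fin ρ → ℝ) (hD : ∀ i, 0 < D i)
    (Sig : Matrix (Fin ρ) (Fin ρ) ℝ) (hSig : Sig = Matrix.diagonal D)
    (V : Matrix (Fin d) (Fin ρ) ℝ)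
    (hSVD : A = U * Sig * Vᵀ)
    (hU : Uᵀ * U = 1) (hV : Vᵀ * V = 1)
    (b : Fin n → ℝ) (S : Matrix (Fin m) (Fin d) ℝ)
    (ε : ℝ) (hε : 0 ≤ ε)
    (hSE : ‖(LinearMap.toContinuousLinearMap
        (Matrix.toEuclideanLin (Vᵀ * Sᵀ * S * V - 1) :
          EuclideanSpace ℝ (Fin ρ) →ₗ[ℝ] EuclideanSpace ℝ (Fin ρ)))‖ ≤ 1 / 2)
    (v : Fin ρ → ℝ)
    (hv : v = (((1 : Matrix (Fin ρ) (Fin ρ) ℝ) + (Sig ^ 2)⁻¹)⁻¹ * Sig⁻¹ * Uᵀ).mulVec b)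
    (hAMM : Real.sqrt (∑ i, ((Vᵀ * Sᵀ * S * V).mulVec v i - v i) ^ 2)
        ≤ Real.sqrt ε * Real.sqrt (∑ i, v i ^ 2))
    (xt xstar : Fin d → ℝ)
    (hxt : xt = (Aᵀ * (A * Sᵀ * S * Aᵀ + 1)⁻¹).mulVec b)
    (hxstar : xstar = (Aᵀ * (A * Aᵀ + 1)⁻¹).mulVec b) :
    Real.sqrt (∑ j, (xt j - xstar j) ^ 2)
      ≤ 2 * Real.sqrt ε * Real.sqrt (∑ j, xstar j ^ 2) :=
  sketched_ridge_solution_error_general n d ρ m A U D hD Sig hSig V hSVD hU hV b S ε hSE v hv hAMM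
    xt xstar hxt hxstar
end

section
/- Let S ∈ ℝ^{m×d} be an OSNAP matrix with sparsity s ≥ 1 whose sign variables σ_{i,j} are 4-wise independent Rademacher, independent of the nonzero positions δ_{i,j}, which satisfy E[∏_{(i,j)∈T} δ_{i,j}] ≤ (s/m)^{|T|} for all sets T and ∑ᵢ δ_{i,j} = s. Then for every unit vector x ∈ ℝ^d, E[(‖Sx‖² − 1)²] ≤ 2/m. -/
/-!
Write `w i j = δ i j * σ i j * x j`. Since `δ² = δ`, `σ² = 1` and each column of `δ` has `s`
ones, `‖S x‖² - 1 = s⁻¹ ∑ᵢ ∑_{j ≠ j'} w i j * w i j'`, a sum of products of `δ σ x` over the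
two-element sets `{(i, j), (i, j')}`. On `±1` values `∏_T σ * ∏_U σ = ∏_{T ∆ U} σ`, and
`|T ∆ U| ≤ 4`, so 4-wise independence gives `E[∏_T σ * ∏_U σ] = [T = U]`; independence of
signs and positions then kills every cross term of the square except the two orderings of the
same pair. With `E[δ i j * δ i j'] ≤ (s / m)²` this leaves
`s⁻² * 2 * (s / m)² * m * (∑ⱼ x j ²)² = 2 / m`.
-/

open MeasureTheory ProbabilityTheory Finset
open scoped symmDiff

theorem Finset.prod_mul_prod_eq_prod_symmDiff {ι M : Type*} [DecidableEq ι] [CommMonoid M]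
    {f : ι → M} (hf : ∀ i, f i * f i = 1) (s t : Finset ι) :
    (∏ i ∈ s, f i) * ∏ i ∈ t, f i = ∏ i ∈ s ∆ t, f i := by
  rw [← prod_union_inter, symmDiff_eq_sup_sdiff_inf, ← prod_sdiff (inter_subset_union (s := s)),
    mul_assoc, ← prod_mul_distrib]
  simp [hf]

theorem Finset.sq_sum_eq_sum_sq_add_sum_offDiag {ι R : Type*} [DecidableEq ι] [CommSemiring R]
    (s : Finset ι) (f : ι → R) :
    (∑ i ∈ s, f i) ^ 2 = ∑ i ∈ s, f i ^ 2 + ∑ ij ∈ s.offDiag, f ij.1 * f ij.2 := by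
  rw [sq, sum_mul_sum, ← sum_product', ← diag_union_offDiag, sum_union (disjoint_diag_offDiag _),
    sum_diag]
  simp [sq]

section Probability

variable {Ω ι : Type*} [MeasurableSpace Ω] {μ : Measure Ω}

theorem integral_eq_zero_of_eq_one_or_neg_one [IsProbabilityMeasure μ] {f : Ω → ℝ}
    (hf : Measurable f) (hval : ∀ ω, f ω = 1 ∨ f ω = -1) (hhalf : μ {ω | f ω = 1} = 1 / 2) :
    ∫ ω, f ω ∂μ = 0 := by
  set A := {ω | f ω = 1}
  have hA : MeasurableSet A := hf (measurableSet_singleton 1)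
  have hf_eq : ∀ ω, f ω = A.indicator (fun _ => 2) ω - 1 := by
    intro ω
    rcases hval ω with h | h
    · simp [A, h]; norm_num
    · rw [Set.indicator_of_notMem (by norm_num [A, h])]; norm_num [h]
  simp_rw [hf_eq]
  rw [integral_sub ((integrable_const 2).indicator hA) (integrable_const 1),
    integral_indicator_const _ hA]
  simp [measureReal_def, hhalf]

theorem integral_finset_prod_eq_zero_of_iIndepFun {f : ι → Ω → ℝ} {T : Finset ι}
    (hind : iIndepFun (fun i : T => f i) μ) (hf : ∀ i, Measurable (f i))
    (hmean : ∀ i, ∫ ω, f i ω ∂μ = 0) (hT : T.Nonempty) :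
    ∫ ω, ∏ i ∈ T, f i ω ∂μ = 0 := by
  obtain ⟨i, hi⟩ := hT
  simp_rw [← prod_attach T]
  simpa using (hind.integral_fun_prod_eq_prod_integral fun i => (hf i).aestronglyMeasurable).trans
    (prod_eq_zero (mem_univ ⟨i, hi⟩) (hmean i))

structure IsFourwiseRademacher (σ : ι → Ω → ℝ) (μ : Measure Ω) : Prop where
  measurable : ∀ i, Measurable (σ i)
  eq_one_or_neg_one : ∀ i ω, σ i ω = 1 ∨ σ i ω = -1
  measure_eq_one : ∀ i, μ {ω | σ i ω = 1} = 1 / 2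
  iIndepFun_of_card_le_four : ∀ T : Finset ι, #T ≤ 4 → iIndepFun (fun i : T => σ i) μ

namespace IsFourwiseRademacher

variable [IsProbabilityMeasure μ] {σ : ι → Ω → ℝ}

theorem integral_eq_zero (hσ : IsFourwiseRademacher σ μ) (i : ι) : ∫ ω, σ i ω ∂μ = 0 :=
  integral_eq_zero_of_eq_one_or_neg_one (hσ.measurable i) (hσ.eq_one_or_neg_one i)
    (hσ.measure_eq_one i)

theorem integral_prod_mul_prod [DecidableEq ι] (hσ : IsFourwiseRademacher σ μ)
    {s t : Finset ι} (hs : #s ≤ 2) (ht : #t ≤ 2) :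
    ∫ ω, (∏ i ∈ s, σ i ω) * ∏ i ∈ t, σ i ω ∂μ = if s = t then 1 else 0 := by
  have hsq : ∀ ω i, σ i ω * σ i ω = 1 := fun ω i => by
    rcases hσ.eq_one_or_neg_one i ω with h | h <;> simp [h]
  simp_rw [fun ω => prod_mul_prod_eq_prod_symmDiff (hsq ω) s t]
  split_ifs with hst
  · simp [hst]
  · have hcard : #(s ∆ t) ≤ 4 := (card_le_card symmDiff_subset_union).trans
      ((card_union_le s t).trans (by omega))
    exact integral_finset_prod_eq_zero_of_iIndepFun (hσ.iIndepFun_of_card_le_four _ hcard)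
      hσ.measurable hσ.integral_eq_zero (symmDiff_nonempty.2 hst)

end IsFourwiseRademacher

theorem integrable_prod_mul_prod [IsFiniteMeasure μ] {f : ι → Ω → ℝ} (hf : ∀ i, Measurable (f i))
    {C : ι → ℝ} (hC : ∀ i ω, |f i ω| ≤ C i) (s t : Finset ι) :
    Integrable (fun ω => (∏ i ∈ s, f i ω) * ∏ i ∈ t, f i ω) μ := by
  refine .of_bound (by fun_prop) ((∏ i ∈ s, C i) * ∏ i ∈ t, C i) (ae_of_all _ fun ω => ?_)
  have hC0 : ∀ i, 0 ≤ C i := fun i => (abs_nonneg _).trans (hC i ω)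
  rw [Real.norm_eq_abs, abs_mul, abs_prod, abs_prod]
  gcongr with i _ j _
  exacts [prod_nonneg fun i _ => hC0 i, hC i ω, hC j ω]

theorem integral_prod_mul_prod_eq_ite [IsProbabilityMeasure μ] [DecidableEq ι]
    {σ δ : ι → Ω → ℝ} (hσ : IsFourwiseRademacher σ μ)
    (hδ : ∀ i, Measurable (δ i)) (hδ01 : ∀ i ω, δ i ω = 0 ∨ δ i ω = 1)
    (hσδ : IndepFun (fun ω i => σ i ω) (fun ω i => δ i ω) μ) (c : ι → ℝ)
    {s t : Finset ι} (hs : #s ≤ 2) (ht : #t ≤ 2) :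
    ∫ ω, (∏ i ∈ s, δ i ω * σ i ω * c i) * ∏ i ∈ t, δ i ω * σ i ω * c i ∂μ =
      if s = t then (∏ i ∈ s, c i ^ 2) * ∫ ω, ∏ i ∈ s, δ i ω ∂μ else 0 := by
  have hsplit : ∫ ω, ((∏ i ∈ s, σ i ω) * ∏ i ∈ t, σ i ω) * ((∏ i ∈ s, δ i ω) * ∏ i ∈ t, δ i ω) ∂μ
      = (∫ ω, (∏ i ∈ s, σ i ω) * ∏ i ∈ t, σ i ω ∂μ) *
        ∫ ω, (∏ i ∈ s, δ i ω) * ∏ i ∈ t, δ i ω ∂μ := by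
    have hF : Measurable fun v : ι → ℝ => (∏ i ∈ s, v i) * ∏ i ∈ t, v i := by fun_prop
    exact (hσδ.comp hF hF).integral_fun_mul_eq_mul_integral
      (hF.comp (measurable_pi_lambda _ hσ.measurable)).aestronglyMeasurable
      (hF.comp (measurable_pi_lambda _ hδ)).aestronglyMeasurable
  simp_rw [prod_mul_distrib]
  calc _ = ∫ ω, ((∏ i ∈ s, c i) * ∏ i ∈ t, c i) *
        (((∏ i ∈ s, σ i ω) * ∏ i ∈ t, σ i ω) * ((∏ i ∈ s, δ i ω) * ∏ i ∈ t, δ i ω)) ∂μ := by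
        congr 1; ext ω; ring
    _ = _ := by
      rw [integral_const_mul, hsplit, hσ.integral_prod_mul_prod hs ht]
      split_ifs with hst
      · subst hst
        have hδsq : ∀ ω i, δ i ω * δ i ω = δ i ω := fun ω i => by
          rcases hδ01 i ω with h | h <;> simp [h]
        simp [← prod_mul_distrib, hδsq, sq]
      · simp

theorem integral_sq_sum_prod_le [IsProbabilityMeasure μ] [DecidableEq ι] {κ : Type*}
    {σ δ : ι → Ω → ℝ} (hσ : IsFourwiseRademacher σ μ)
    (hδ : ∀ i, Measurable (δ i)) (hδ01 : ∀ i ω, δ i ω = 0 ∨ δ i ω = 1)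
    (hσδ : IndepFun (fun ω i => σ i ω) (fun ω i => δ i ω) μ) (c : ι → ℝ)
    (Q : Finset κ) (T : κ → Finset ι) (hT : ∀ q ∈ Q, #(T q) ≤ 2)
    (hfiber : ∀ q ∈ Q, #{q' ∈ Q | T q = T q'} ≤ 2) :
    ∫ ω, (∑ q ∈ Q, ∏ i ∈ T q, δ i ω * σ i ω * c i) ^ 2 ∂μ ≤
      2 * ∑ q ∈ Q, (∏ i ∈ T q, c i ^ 2) * ∫ ω, ∏ i ∈ T q, δ i ω ∂μ := by
  have hint : ∀ q q', Integrable (fun ω => (∏ i ∈ T q, δ i ω * σ i ω * c i) *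
      ∏ i ∈ T q', δ i ω * σ i ω * c i) μ := fun q q' =>
    integrable_prod_mul_prod (C := fun i => |c i|)
      (fun i => ((hδ i).mul (hσ.measurable i)).mul_const _) (fun i ω => by
        rcases hδ01 i ω with h | h <;> rcases hσ.eq_one_or_neg_one i ω with h' | h' <;>
          simp [h, h']) _ _
  have hnonneg : ∀ q, 0 ≤ (∏ i ∈ T q, c i ^ 2) * ∫ ω, ∏ i ∈ T q, δ i ω ∂μ := fun q =>
    mul_nonneg (prod_nonneg fun i _ => sq_nonneg _) (integral_nonneg fun ω =>
      prod_nonneg fun i _ => (hδ01 i ω).elim (·.ge) (fun h => h ▸ zero_le_one))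
  conv_lhs => enter [2, ω]; rw [sq, sum_mul_sum]
  rw [integral_finsetSum _ fun q _ => integrable_finsetSum _ fun q' _ => hint q q', mul_sum]
  refine sum_le_sum fun q hq => ?_
  rw [integral_finsetSum _ fun q' _ => hint q q']
  calc ∑ q' ∈ Q, ∫ ω, (∏ i ∈ T q, δ i ω * σ i ω * c i) * ∏ i ∈ T q', δ i ω * σ i ω * c i ∂μ
      = #{q' ∈ Q | T q = T q'} * ((∏ i ∈ T q, c i ^ 2) * ∫ ω, ∏ i ∈ T q, δ i ω ∂μ) := by
        rw [sum_congr rfl fun q' hq' =>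
          integral_prod_mul_prod_eq_ite hσ hδ hδ01 hσδ c (hT q hq) (hT q' hq'), sum_ite]
        simp
    _ ≤ 2 * ((∏ i ∈ T q, c i ^ 2) * ∫ ω, ∏ i ∈ T q, δ i ω ∂μ) := by
        gcongr
        · exact hnonneg q
        · exact_mod_cast hfiber q hq

end Probability

section RowPairs

variable {α β : Type*} [DecidableEq α] [DecidableEq β]

def rowPair (q : α × β × β) : Finset (α × β) :=
  {(q.1, q.2.1), (q.1, q.2.2)}

theorem card_rowPair_le (q : α × β × β) : #(rowPair q) ≤ 2 := card_le_two

theorem card_rowPair {q : α × β × β} (hq : q.2.1 ≠ q.2.2) : #(rowPair q) = 2 :=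
  card_pair (by simpa using hq)

theorem prod_rowPair {M : Type*} [CommMonoid M] {q : α × β × β} (hq : q.2.1 ≠ q.2.2)
    (f : α × β → M) : ∏ p ∈ rowPair q, f p = f (q.1, q.2.1) * f (q.1, q.2.2) :=
  prod_pair (by simpa using hq)

theorem card_filter_rowPair_eq_le_two (s : Finset α) (t : Finset β) {q : α × β × β}
    (hq : q.2.1 ≠ q.2.2) : #{q' ∈ s ×ˢ t.offDiag | rowPair q = rowPair q'} ≤ 2 := by
  refine (card_le_card fun q' hq' => ?_).trans (card_le_two (a := q) (b := (q.1, q.2.2, q.2.1)))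
  obtain ⟨i, j, j'⟩ := q
  obtain ⟨i', k, k'⟩ := q'
  rw [mem_filter, mem_product, mem_offDiag] at hq'
  obtain ⟨⟨-, -, -, hkk⟩, hpair⟩ := hq'
  have h1 : (i', k) ∈ rowPair (i, j, j') := hpair ▸ by simp [rowPair]
  have h2 : (i', k') ∈ rowPair (i, j, j') := hpair ▸ by simp [rowPair]
  simp only [rowPair, mem_insert, mem_singleton, Prod.mk.injEq] at h1 h2 ⊢
  grind

theorem sum_prod_rowPair_le [Fintype α] [Fintype β] (g : β → ℝ) :
    ∑ q ∈ (univ : Finset α) ×ˢ univ.offDiag, ∏ p ∈ rowPair q, g p.2 ≤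
      Fintype.card α * (∑ j, g j) ^ 2 := by
  rw [sum_product, ← card_univ, ← nsmul_eq_mul]
  refine sum_le_card_nsmul _ _ _ fun i _ => ?_
  rw [sum_congr rfl fun jj hjj => prod_rowPair (q := (i, jj)) (mem_offDiag.1 hjj).2.2 _,
    sq_sum_eq_sum_sq_add_sum_offDiag]
  exact le_add_of_nonneg_left (sum_nonneg fun j _ => sq_nonneg _)

theorem sum_sq_sum_sub_one_eq [Fintype α] [Fintype β] {s : ℝ} (hs : 0 < s) {δ σ : α → β → ℝ}
    (hδ01 : ∀ i j, δ i j = 0 ∨ δ i j = 1) (hσ : ∀ i j, σ i j = 1 ∨ σ i j = -1)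
    (hcol : ∀ j, ∑ i, δ i j = s) {x : β → ℝ} (hx : ∑ j, x j ^ 2 = 1) :
    ∑ i, (∑ j, δ i j * σ i j / √s * x j) ^ 2 - 1 =
      (∑ q ∈ univ ×ˢ univ.offDiag, ∏ p ∈ rowPair q, δ p.1 p.2 * σ p.1 p.2 * x p.2) / s := by
  have hrow : ∀ i, (∑ j, δ i j * σ i j / √s * x j) ^ 2 = (∑ j, δ i j * x j ^ 2 +
      ∑ jj ∈ univ.offDiag, δ i jj.1 * σ i jj.1 * x jj.1 * (δ i jj.2 * σ i jj.2 * x jj.2)) / s := by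
    intro i
    have hdiag : ∀ j, (δ i j * σ i j * x j) ^ 2 = δ i j * x j ^ 2 := fun j => by
      rcases hδ01 i j with h | h <;> rcases hσ i j with h' | h' <;> simp [h, h']
    simp_rw [div_mul_eq_mul_div, ← sum_div, div_pow, Real.sq_sqrt hs.le,
      sq_sum_eq_sum_sq_add_sum_offDiag, hdiag]
  have hcols : ∑ i, ∑ j, δ i j * x j ^ 2 = s := by
    rw [sum_comm]
    simp_rw [← sum_mul, hcol, ← mul_sum, hx, mul_one]
  rw [sum_congr rfl fun i _ => hrow i, ← sum_div, sum_add_distrib, hcols, sum_product,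
    add_div, div_self hs.ne', add_sub_cancel_left]
  congr 1
  exact sum_congr rfl fun i _ => sum_congr rfl fun jj hjj =>
    (prod_rowPair (q := (i, jj)) (mem_offDiag.1 hjj).2.2
      fun p => δ p.1 p.2 * σ p.1 p.2 * x p.2).symm

end RowPairs

theorem osnap_second_moment_bound_general
    {Ω : Type*} [MeasurableSpace Ω] (μ : Measure Ω) [IsProbabilityMeasure μ]
    (m d s : ℕ) (hs : 0 < s)
    (δ : Fin m → Fin d → Ω → ℝ) (hδmeas : ∀ i j, Measurable (δ i j))
    (hδ01 : ∀ i j ω, δ i j ω = 0 ∨ δ i j ω = 1)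
    (hcol : ∀ j ω, ∑ i, δ i j ω = (s : ℝ))
    (hδprod : ∀ T : Finset (Fin m × Fin d),
      (∫ ω, ∏ p ∈ T, δ p.1 p.2 ω ∂μ) ≤ ((s : ℝ) / m) ^ T.card)
    (σ : Fin m → Fin d → Ω → ℝ) (hσmeas : ∀ i j, Measurable (σ i j))
    (hσval : ∀ i j ω, σ i j ω = 1 ∨ σ i j ω = -1)
    (hσunif : ∀ i j, μ {ω | σ i j ω = 1} = 1 / 2)
    (hσ4wise : ∀ T : Finset (Fin m × Fin d), T.card ≤ 4 →
      iIndepFun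
        (fun p : {p // p ∈ T} => fun ω => σ (p : Fin m × Fin d).1 (p : Fin m × Fin d).2 ω) μ)
    (hσδ : IndepFun (fun ω (p : Fin m × Fin d) => σ p.1 p.2 ω)
      (fun ω (p : Fin m × Fin d) => δ p.1 p.2 ω) μ) :
    ∀ x : Fin d → ℝ, (∑ j, x j ^ 2) = 1 →
      (∫ ω, ((∑ i, (∑ j, δ i j ω * σ i j ω / Real.sqrt s * x j) ^ 2) - 1) ^ 2 ∂μ)
        ≤ 2 / (m : ℝ) := by
  intro x hx
  have hsR : (0 : ℝ) < s := by exact_mod_cast hs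
  have hσ : IsFourwiseRademacher (fun p : Fin m × Fin d => σ p.1 p.2) μ :=
    ⟨fun _ => hσmeas _ _, fun _ => hσval _ _, fun _ => hσunif _ _, hσ4wise⟩
  set Q := (univ : Finset (Fin m)) ×ˢ (univ : Finset (Fin d)).offDiag
  have hQ : ∀ q ∈ Q, q.2.1 ≠ q.2.2 := fun q hq => (mem_offDiag.1 (mem_product.1 hq).2).2.2
  calc _ = (∫ ω, (∑ q ∈ Q, ∏ p ∈ rowPair q, δ p.1 p.2 ω * σ p.1 p.2 ω * x p.2) ^ 2 ∂μ) /
        s ^ 2 := by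
        simp_rw [sum_sq_sum_sub_one_eq hsR (hδ01 · · _) (hσval · · _) (hcol · _) hx, div_pow,
          integral_div]
        rfl
    _ ≤ 2 * (∑ q ∈ Q, (∏ p ∈ rowPair q, x p.2 ^ 2) * ∫ ω, ∏ p ∈ rowPair q, δ p.1 p.2 ω ∂μ) /
        s ^ 2 := by
        gcongr
        exact integral_sq_sum_prod_le hσ (fun _ => hδmeas _ _) (fun _ => hδ01 _ _) hσδ _ Q rowPair
          (fun q _ => card_rowPair_le q) (fun q hq => card_filter_rowPair_eq_le_two _ _ (hQ q hq))
    _ ≤ 2 * (∑ q ∈ Q, (∏ p ∈ rowPair q, x p.2 ^ 2) * (s / m) ^ 2) / s ^ 2 := by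
        gcongr with q hq
        simpa [card_rowPair (hQ q hq)] using hδprod (rowPair q)
    _ ≤ 2 * (m * (∑ j, x j ^ 2) ^ 2 * (s / m) ^ 2) / s ^ 2 := by
        rw [← sum_mul]
        gcongr
        simpa using sum_prod_rowPair_le (α := Fin m) (fun j => x j ^ 2)
    _ = 2 / m := by
        rw [hx]
        field_simp

/-- For an OSNAP matrix with sparsity `s ≥ 1`, 4-wise independent
uniform signs independent of the positions, and positions satisfying
`E[∏_{(i,j)∈T} δ_{i,j}] ≤ (s/m)^{|T|}` and `∑ᵢ δ_{i,j} = s`, every unit vector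
`x` satisfies `E[(‖Sx‖² - 1)²] ≤ 2/m`. -/
theorem osnap_second_moment_bound
    {Ω : Type*} [MeasurableSpace Ω] (μ : Measure Ω) [IsProbabilityMeasure μ]
    (m d s : ℕ) (hm : 0 < m) (hs : 0 < s)
    (δ : Fin m → Fin d → Ω → ℝ) (hδmeas : ∀ i j, Measurable (δ i j))
    (hδ01 : ∀ i j ω, δ i j ω = 0 ∨ δ i j ω = 1)
    (hcol : ∀ j ω, ∑ i, δ i j ω = (s : ℝ))
    (hδprod : ∀ T : Finset (Fin m × Fin d),
      (∫ ω, ∏ p ∈ T, δ p.1 p.2 ω ∂μ) ≤ ((s : ℝ) / m) ^ T.card)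
    (σ : Fin m → Fin d → Ω → ℝ) (hσmeas : ∀ i j, Measurable (σ i j))
    (hσval : ∀ i j ω, σ i j ω = 1 ∨ σ i j ω = -1)
    (hσunif : ∀ i j, μ {ω | σ i j ω = 1} = 1 / 2)
    (hσ4wise : ∀ T : Finset (Fin m × Fin d), T.card ≤ 4 →
      iIndepFun
        (fun p : {p // p ∈ T} => fun ω => σ (p : Fin m × Fin d).1 (p : Fin m × Fin d).2 ω) μ)
    (hσδ : IndepFun (fun ω (p : Fin m × Fin d) => σ p.1 p.2 ω)
      (fun ω (p : Fin m × Fin d) => δ p.1 p.2 ω) μ) :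
    ∀ x : Fin d → ℝ, (∑ j, x j ^ 2) = 1 →
      (∫ ω, ((∑ i, (∑ j, δ i j ω * σ i j ω / Real.sqrt s * x j) ^ 2) - 1) ^ 2 ∂μ)
        ≤ 2 / (m : ℝ) :=
  osnap_second_moment_bound_general μ m d s hs δ hδmeas hδ01 hcol hδprod σ hσmeas hσval hσunif
    hσ4wise hσδ
end

section
/- Fix x, y ∈ {−1,+1}^d, let N = |{i : xᵢ ≠ yᵢ}| be their Hamming distance, let M ∈ ℝ^{2×d} be the matrix with rows x and y, and let λ > 0. Then min_z ‖Mz − (1, −1)ᵀ‖² + λ‖z‖² = 2λ/(λ + 2N). -/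
open Matrix

/-- For `x, y ∈ {±1}^d` with Hamming distance `N`, the ridge
regression problem with design matrix having rows `x, y` and target `(1,-1)ᵀ`
has optimal value `2λ/(λ + 2N)`. -/
theorem gap_hamming_ridge_value
    (d : ℕ) (x y : Fin d → ℝ)
    (hx : ∀ i, x i = 1 ∨ x i = -1) (hy : ∀ i, y i = 1 ∨ y i = -1)
    (N : ℕ) (hN : N = (Finset.univ.filter fun i => x i ≠ y i).card)
    (M : Matrix (Fin 2) (Fin d) ℝ) (hM : M = Matrix.of ![x, y])
    (l : ℝ) (hl : 0 < l) :
    IsLeast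
      (Set.range fun z : Fin d → ℝ =>
        (∑ i, (M.mulVec z i - ![(1 : ℝ), -1] i) ^ 2) + l * ∑ j, z j ^ 2)
      (2 * l / (l + 2 * N)) := by
  subst hM
  have hsqx : ∀ i, x i ^ 2 = 1 := by
    intro i; rcases hx i with h | h <;> rw [h] <;> norm_num
  have hsqy : ∀ i, y i ^ 2 = 1 := by
    intro i; rcases hy i with h | h <;> rw [h] <;> norm_num
  have hNnn : (0:ℝ) ≤ (N:ℝ) := Nat.cast_nonneg N
  have hden : (0:ℝ) < l + 2 * N := by positivity
  -- the sum of (1 - x i * y i)/2 equals N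
  have hT : ∑ i, (1 - x i * y i) / 2 = (N : ℝ) := by
    have h1 : ∀ i ∈ Finset.univ, (1 - x i * y i) / 2
        = if x i ≠ y i then (1:ℝ) else 0 := by
      intro i _
      rcases hx i with h | h <;> rcases hy i with h' | h' <;>
        simp [h, h'] <;> norm_num
    rw [Finset.sum_congr rfl h1, Finset.sum_ite, Finset.sum_const,
      Finset.sum_const, hN]
    simp
  have hX : ∑ j, x j * ((x j - y j) / 2) = (N : ℝ) := by
    rw [← hT]
    exact Finset.sum_congr rfl fun i _ => by linear_combination (hsqx i) / 2
  have hY : ∑ j, y j * ((x j - y j) / 2) = -(N : ℝ) := by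
    rw [← hT, ← Finset.sum_neg_distrib]
    exact Finset.sum_congr rfl fun i _ => by linear_combination (-1/2) * hsqy i
  have hZ : ∑ j, ((x j - y j) / 2) ^ 2 = (N : ℝ) := by
    rw [← hT]
    exact Finset.sum_congr rfl fun i _ => by
      linear_combination (hsqx i) / 4 + (hsqy i) / 4
  -- mulVec computations
  have hmv0 : ∀ z : Fin d → ℝ, (Matrix.of ![x, y]).mulVec z 0 = ∑ j, x j * z j := by
    intro z; simp [Matrix.mulVec, dotProduct]
  have hmv1 : ∀ z : Fin d → ℝ, (Matrix.of ![x, y]).mulVec z 1 = ∑ j, y j * z j := by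
    intro z; simp [Matrix.mulVec, dotProduct]
  constructor
  · -- membership: the explicit minimizer
    set c : ℝ := 2 / (l + 2 * N) with hc
    refine ⟨fun i => c * ((x i - y i) / 2), ?_⟩
    have hxs : ∑ j, x j * (c * ((x j - y j) / 2)) = c * N := by
      rw [← hX, Finset.mul_sum]
      exact Finset.sum_congr rfl fun i _ => by ring
    have hys : ∑ j, y j * (c * ((x j - y j) / 2)) = -(c * N) := by
      have h : ∑ j, y j * (c * ((x j - y j) / 2))
          = c * ∑ j, y j * ((x j - y j) / 2) := by
        rw [Finset.mul_sum]
        exact Finset.sum_congr rfl fun i _ => by ring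
      rw [h, hY]; ring
    have hzs : ∑ j, (c * ((x j - y j) / 2)) ^ 2 = c ^ 2 * N := by
      rw [← hZ, Finset.mul_sum]
      exact Finset.sum_congr rfl fun i _ => by ring
    simp only [Fin.sum_univ_two, hmv0, hmv1, hxs, hys, hzs,
      Matrix.cons_val_zero, Matrix.cons_val_one, Matrix.head_cons]
    rw [hc]
    field_simp
    ring
  · -- lower bound
    rintro v ⟨z, rfl⟩
    simp only [Fin.sum_univ_two, hmv0, hmv1,
      Matrix.cons_val_zero, Matrix.cons_val_one, Matrix.head_cons]
    set a := ∑ j, x j * z j with ha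
    set b := ∑ j, y j * z j with hb
    set s := ∑ j, z j ^ 2 with hs
    have hs0 : 0 ≤ s := Finset.sum_nonneg fun i _ => sq_nonneg _
    -- Cauchy–Schwarz: (a - b)^2 ≤ 4 N s
    have hCS : (a - b) ^ 2 ≤ 4 * N * s := by
      have h1 : a - b = ∑ j, (x j - y j) * z j := by
        rw [ha, hb, ← Finset.sum_sub_distrib]
        exact Finset.sum_congr rfl fun i _ => by ring
      have h2 : (∑ j, (x j - y j) * z j) ^ 2
          ≤ (∑ j, (x j - y j) ^ 2) * ∑ j, z j ^ 2 :=
        Finset.sum_mul_sq_le_sq_mul_sq _ _ _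
      have h3 : ∑ j, (x j - y j) ^ 2 = 4 * N := by
        rw [← hT, Finset.mul_sum]
        refine Finset.sum_congr rfl fun i _ => ?_
        linear_combination hsqx i + hsqy i
      rw [h1]
      calc (∑ j, (x j - y j) * z j) ^ 2 ≤ (∑ j, (x j - y j) ^ 2) * s := h2
        _ = 4 * N * s := by rw [h3]
    rw [div_le_iff₀ hden]
    rcases eq_or_ne N 0 with hN0 | hN0
    · -- N = 0 : then x = y, a = b
      have hab : a = b := by
        have hxy : ∀ i, x i = y i := by
          intro i
          by_contra h
          have hmem : i ∈ Finset.univ.filter fun i => x i ≠ y i := by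
            simp [h]
          have := Finset.card_pos.mpr ⟨i, hmem⟩
          omega
        rw [ha, hb]
        exact Finset.sum_congr rfl fun i _ => by rw [hxy i]
      rw [hN0]
      push_cast
      nlinarith [sq_nonneg (a + b), sq_nonneg (a - 1), sq_nonneg (b + 1),
        mul_nonneg hl.le hs0, hab]
    · have hNpos : (0:ℝ) < N := by
        have : 0 < N := Nat.pos_of_ne_zero hN0
        exact_mod_cast this
      nlinarith [sq_nonneg ((2 * (N:ℝ) + l) * (a - b) - 4 * N),
        mul_nonneg (mul_nonneg hNnn hden.le) (sq_nonneg (a + b)),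
        mul_nonneg (mul_nonneg hden.le hl.le) (by linarith [hCS] : (0:ℝ) ≤ 4 * N * s - (a - b) ^ 2),
        mul_nonneg hl.le hs0, hNpos]
end

section
/- Let A ⊆ [d], B ⊆ [d], let x⁽¹⁾, x⁽²⁾ ∈ {0,1}^d be their indicator vectors, let M ∈ ℝ^{2×d} have rows x⁽¹⁾ and x⁽²⁾, and fix 0 < λ < 1. If A ∩ B ≠ ∅, then min_z ‖Mz − (1,1)ᵀ‖² + λ‖z‖₁ ≤ λ. If A ∩ B = ∅, then min_z ‖Mz − (1,1)ᵀ‖² + λ‖z‖₁ ≥ 3λ/2. -/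
open Matrix

lemma lasso_key (l s : ℝ) (hl0 : 0 < l) (hl1 : l < 1) :
    3 * l / 4 ≤ (s - 1) ^ 2 + l * |s| := by
  rcases le_or_gt 0 s with h | h
  · rw [abs_of_nonneg h]; nlinarith [sq_nonneg (s - (1 - l/2))]
  · rw [abs_of_neg h]; nlinarith [sq_nonneg (s - 1)]

/-- Lasso value gap for the Disjointness reduction: with `M` the
`2×d` matrix whose rows are the indicator vectors of `A` and `B` and
`0 < l < 1`, the Lasso optimum is at most `l` when `A ∩ B ≠ ∅` and at least
`3l/2` when `A ∩ B = ∅`. -/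
theorem lasso_disjointness_gap
    (d : ℕ) (A B : Finset (Fin d))
    (x₁ x₂ : Fin d → ℝ)
    (hx₁ : ∀ i, x₁ i = if i ∈ A then 1 else 0)
    (hx₂ : ∀ i, x₂ i = if i ∈ B then 1 else 0)
    (M : Matrix (Fin 2) (Fin d) ℝ) (hM : M = Matrix.of ![x₁, x₂])
    (l : ℝ) (hl0 : 0 < l) (hl1 : l < 1)
    (f : (Fin d → ℝ) → ℝ)
    (hf : ∀ z, f z = (∑ i, (M.mulVec z i - 1) ^ 2) + l * ∑ j, |z j|) :
    ((A ∩ B).Nonempty → ∃ z, f z ≤ l)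
    ∧ (A ∩ B = ∅ → ∀ z, 3 * l / 2 ≤ f z) := by
  have hmv : ∀ z : Fin d → ℝ,
      M.mulVec z 0 = ∑ j ∈ A, z j ∧ M.mulVec z 1 = ∑ j ∈ B, z j := by
    intro z
    constructor
    · simp only [hM, Matrix.mulVec, dotProduct, Matrix.of_apply,
        Matrix.cons_val_zero]
      simp [hx₁, ite_mul]
    · simp only [hM, Matrix.mulVec, dotProduct, Matrix.of_apply,
        Matrix.cons_val_one, Matrix.head_cons]
      simp [hx₂, ite_mul]
  constructor
  · rintro ⟨i, hi⟩
    rw [Finset.mem_inter] at hi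
    refine ⟨fun j => if j = i then 1 else 0, ?_⟩
    rw [hf]
    have h1 : (∑ j ∈ A, if j = i then (1:ℝ) else 0) = 1 := by
      rw [Finset.sum_ite_eq' A i (fun _ => (1:ℝ))]; simp [hi.1]
    have h2 : (∑ j ∈ B, if j = i then (1:ℝ) else 0) = 1 := by
      rw [Finset.sum_ite_eq' B i (fun _ => (1:ℝ))]; simp [hi.2]
    obtain ⟨hA, hB⟩ := hmv (fun j => if j = i then 1 else 0)
    rw [Fin.sum_univ_two, hA, hB, h1, h2]
    have : (∑ j : Fin d, |if j = i then (1:ℝ) else 0|) = 1 := by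
      have : ∀ j : Fin d, |if j = i then (1:ℝ) else 0| = if j = i then 1 else 0 := by
        intro j; split <;> simp
      simp [this]
    rw [this]
    norm_num
  · intro hAB z
    rw [hf]
    obtain ⟨hA, hB⟩ := hmv z
    rw [Fin.sum_univ_two, hA, hB]
    set s := ∑ j ∈ A, z j
    set t := ∑ j ∈ B, z j
    have hdisj : Disjoint A B := Finset.disjoint_iff_inter_eq_empty.mpr hAB
    have hsum : |s| + |t| ≤ ∑ j : Fin d, |z j| := by
      calc |s| + |t| ≤ (∑ j ∈ A, |z j|) + ∑ j ∈ B, |z j| := by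
            gcongr <;> exact Finset.abs_sum_le_sum_abs _ _
        _ = ∑ j ∈ A ∪ B, |z j| := (Finset.sum_union hdisj).symm
        _ ≤ ∑ j : Fin d, |z j| := Finset.sum_le_sum_of_subset_of_nonneg
            (Finset.subset_univ _) (fun _ _ _ => abs_nonneg _)
    have k1 := lasso_key l s hl0 hl1
    have k2 := lasso_key l t hl0 hl1
    nlinarith [abs_nonneg s, abs_nonneg t]
end

section
/- Let A ⊆ [d], B ⊆ [d] with A ∩ B = ∅, let M ∈ ℝ^{2×d} have rows equal to the indicator vectors of A and B, and fix 0 < λ < 2√2/3. Then min_z ‖Mz − (1,1)ᵀ‖ + λ‖z‖₁ = min(√2, 2λ) ≥ 3λ/2, while if A ∩ B ≠ ∅ the minimum is at most λ. -/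
/-!
Only `a = ∑_A z`, `b = ∑_B z` and `‖z‖₁` enter the objective, and for disjoint `A`, `B` we have
`‖z‖₁ ≥ s := |a| + |b|`. Since `|a - 1| + |b - 1| ≥ 2 - s` and the ℓ¹ norm in the plane is at most
`√2` times the Euclidean one, the residual is at least `(2 - s)/√2`. So for `s ≤ 2` the objective is
at least `(1 - s/2)·√2 + (s/2)·2λ`, a convex combination of `√2` and `2λ`, and for `s ≥ 2` it is at
least `2λ`. The values `√2` and `2λ` are attained at `z = 0` and `z = e_i + e_j` with `i ∈ A`, `j ∈ B`.
-/

open Matrix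

theorem dotProduct_ite_mem_one {ι R : Type*} [Fintype ι] [DecidableEq ι] [NonAssocSemiring R]
    (s : Finset ι) (z : ι → R) : (fun i => if i ∈ s then (1 : R) else 0) ⬝ᵥ z = ∑ j ∈ s, z j := by
  simp [dotProduct, ite_mul, Finset.sum_ite_mem]

theorem abs_add_abs_le_sqrt_two_mul_sqrt (u v : ℝ) :
    |u| + |v| ≤ √2 * √(u ^ 2 + v ^ 2) := by
  rw [← Real.sqrt_mul zero_le_two, Real.le_sqrt (by positivity) (by positivity)]
  nlinarith [sq_nonneg (|u| - |v|), sq_abs u, sq_abs v]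

theorem two_sub_abs_add_abs_le (a b : ℝ) :
    2 - (|a| + |b|) ≤ √2 * √((a - 1) ^ 2 + (b - 1) ^ 2) := by
  have ha := abs_sub_abs_le_abs_sub 1 a
  have hb := abs_sub_abs_le_abs_sub 1 b
  rw [abs_one, abs_sub_comm] at ha hb
  linarith [abs_add_abs_le_sqrt_two_mul_sqrt (a - 1) (b - 1)]

theorem min_sqrt_two_le_add_mul {l q s : ℝ} (hl : 0 ≤ l) (hq : 0 ≤ q) (hs : 0 ≤ s)
    (h : 2 - s ≤ √2 * q) : min √2 (2 * l) ≤ q + l * s := by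
  rcases le_total 2 s with hs2 | hs2
  · nlinarith [min_le_right √2 (2 * l)]
  · have hq : (1 - s / 2) * √2 ≤ q := by
      refine le_of_mul_le_mul_left ?_ (by positivity : (0 : ℝ) < √2)
      linear_combination (1 - s / 2) * Real.mul_self_sqrt zero_le_two + h
    calc min √2 (2 * l) = (1 - s / 2) * min √2 (2 * l) + s / 2 * min √2 (2 * l) := by ring
      _ ≤ (1 - s / 2) * √2 + s / 2 * (2 * l) :=
        add_le_add (mul_le_mul_of_nonneg_left (min_le_left _ _) (by linarith))
          (mul_le_mul_of_nonneg_left (min_le_right _ _) (by linarith))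
      _ ≤ q + l * s := by linarith

theorem min_sqrt_two_le_sqrt_add {l : ℝ} (hl : 0 ≤ l) (a b : ℝ) :
    min √2 (2 * l) ≤ √((a - 1) ^ 2 + (b - 1) ^ 2) + l * (|a| + |b|) :=
  min_sqrt_two_le_add_mul hl (Real.sqrt_nonneg _) (by positivity) (two_sub_abs_add_abs_le a b)

theorem abs_sum_add_abs_sum_le_sum_abs {ι α : Type*} [Fintype ι] [DecidableEq ι]
    [AddCommGroup α] [LinearOrder α] [IsOrderedAddMonoid α] {A B : Finset ι}
    (h : Disjoint A B) (z : ι → α) :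
    |∑ j ∈ A, z j| + |∑ j ∈ B, z j| ≤ ∑ j, |z j| :=
  calc |∑ j ∈ A, z j| + |∑ j ∈ B, z j| ≤ ∑ j ∈ A, |z j| + ∑ j ∈ B, |z j| :=
        add_le_add (Finset.abs_sum_le_sum_abs _ _) (Finset.abs_sum_le_sum_abs _ _)
    _ = ∑ j ∈ A ∪ B, |z j| := (Finset.sum_union h).symm
    _ ≤ ∑ j, |z j| := Finset.sum_le_sum_of_subset_of_nonneg (Finset.subset_univ _)
        fun _ _ _ => abs_nonneg _

theorem exists_sum_eq_one_sum_eq_one_sum_abs_eq_two {ι : Type*} [Fintype ι] [DecidableEq ι]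
    {A B : Finset ι} (hA : A.Nonempty) (hB : B.Nonempty) (h : Disjoint A B) :
    ∃ z : ι → ℝ, ∑ j ∈ A, z j = 1 ∧ ∑ j ∈ B, z j = 1 ∧ ∑ j, |z j| = 2 := by
  obtain ⟨i, hi⟩ := hA
  obtain ⟨j, hj⟩ := hB
  have hiB : i ∉ B := Finset.disjoint_left.mp h hi
  have hjA : j ∉ A := Finset.disjoint_right.mp h hj
  set z : ι → ℝ := Pi.single i 1 + Pi.single j 1
  have hz_nonneg : 0 ≤ z :=
    add_nonneg (Pi.single_nonneg.mpr zero_le_one) (Pi.single_nonneg.mpr zero_le_one)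
  have hz : ∀ k, |z k| = z k := fun k => abs_of_nonneg (hz_nonneg k)
  refine ⟨z, ?_, ?_, (Finset.sum_congr rfl fun k _ => hz k).trans ?_⟩ <;>
    simp [z, Finset.sum_add_distrib, Finset.sum_pi_single', hi, hj, hiB, hjA, one_add_one_eq_two]

/-- Square-root Lasso value gap for the Disjointness reduction:
with `M` the `2×d` matrix whose rows are the indicator vectors of nonempty sets
`A` and `B` and `0 < l < 2√2/3`, if `A ∩ B = ∅` the optimum equals
`min(√2, 2l) ≥ 3l/2`, while if `A ∩ B ≠ ∅` the optimum is at most `l`. -/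
theorem sqrt_lasso_disjointness_gap
    (d : ℕ) (A B : Finset (Fin d)) (hA : A.Nonempty) (hB : B.Nonempty)
    (x₁ x₂ : Fin d → ℝ)
    (hx₁ : ∀ i, x₁ i = if i ∈ A then 1 else 0)
    (hx₂ : ∀ i, x₂ i = if i ∈ B then 1 else 0)
    (M : Matrix (Fin 2) (Fin d) ℝ) (hM : M = Matrix.of ![x₁, x₂])
    (l : ℝ) (hl0 : 0 < l) (hl1 : l < 2 * Real.sqrt 2 / 3)
    (f : (Fin d → ℝ) → ℝ)
    (hf : ∀ z, f z = Real.sqrt (∑ i, (M.mulVec z i - 1) ^ 2) + l * ∑ j, |z j|) :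
    (A ∩ B = ∅ →
      IsLeast (Set.range f) (min (Real.sqrt 2) (2 * l))
      ∧ 3 * l / 2 ≤ min (Real.sqrt 2) (2 * l))
    ∧ ((A ∩ B).Nonempty → ∃ z, f z ≤ l) := by
  obtain rfl : x₁ = _ := funext hx₁
  obtain rfl : x₂ = _ := funext hx₂
  have hfAB : ∀ z, f z = √((∑ j ∈ A, z j - 1) ^ 2 + (∑ j ∈ B, z j - 1) ^ 2) + l * ∑ j, |z j| := by
    intro z
    simp only [hf, hM, Fin.sum_univ_two, mulVec, of_apply, Matrix.cons_val_zero, Matrix.cons_val_one,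
      dotProduct_ite_mem_one]
  refine ⟨fun hAB => ?_, ?_⟩
  · have hdisj : Disjoint A B := Finset.disjoint_iff_inter_eq_empty.mpr hAB
    refine ⟨⟨?_, ?_⟩, le_min (by linarith) (by linarith)⟩
    · rcases min_choice √2 (2 * l) with h | h <;> rw [h]
      · exact ⟨0, by norm_num [hfAB]⟩
      · obtain ⟨z, hzA, hzB, hz⟩ := exists_sum_eq_one_sum_eq_one_sum_abs_eq_two hA hB hdisj
        exact ⟨z, by rw [hfAB, hzA, hzB, hz]; norm_num; ring⟩
    · rintro _ ⟨z, rfl⟩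
      rw [hfAB]
      linarith [min_sqrt_two_le_sqrt_add hl0.le (∑ j ∈ A, z j) (∑ j ∈ B, z j),
        mul_le_mul_of_nonneg_left (abs_sum_add_abs_sum_le_sum_abs hdisj z) hl0.le]
  · rintro ⟨i, hi⟩
    rw [Finset.mem_inter] at hi
    refine ⟨Pi.single i 1, ?_⟩
    simp [hfAB, hi.1, hi.2, Pi.single_apply, apply_ite]
end
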